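/- arXiv:1111.6552 — 2 statements merged into one kernel-verified Lean document; each statement's English description precedes it below -/
import Mathlib

section
/- If M ∈ MMCR, F ∈ MFCR, M ⊆ X ⊆ F, and bond(M) = bond(F), then bond(X) = bond(F) and SConj(X) = SConj(F); in particular X ∈ MCR. -/
variable {τ ι : Type*} [Fintype τ] [Fintype ι]

/-- Conjunctive support: number of transactions containing every item of `X`. -/
noncomputable def SConj (R : τ → ι → Prop) (X : Set ι) : ℕ := Set.ncard {t : τ | ∀ i ∈ X, R t i}

/-- Disjunctive support: number of transactions containing some item of `X`. -/
noncomputable def SDisj (R : τ → ι → Prop) (X : Set ι) : ℕ := Set.ncard {t : τ | ∃ i ∈ X, R t i}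

/-- Negative support: number of transactions containing no item of `X`. -/
noncomputable def SNeg (R : τ → ι → Prop) (X : Set ι) : ℕ := Set.ncard {t : τ | ∀ i ∈ X, ¬ R t i}

/-- The bond measure of `X` (0 when `SDisj X = 0`). -/
noncomputable def bond (R : τ → ι → Prop) (X : Set ι) : ℚ :=
  (SConj R X : ℚ) / (SDisj R X : ℚ)

/-- Rare correlated patterns. -/
def MCR (R : τ → ι → Prop) (minsupp : ℕ) (minbond : ℚ) : Set (Set ι) :=
  {X | X.Nonempty ∧ SConj R X < minsupp ∧ minbond ≤ bond R X}

/-- Closed rare correlated patterns. -/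
def MFCR (R : τ → ι → Prop) (minsupp : ℕ) (minbond : ℚ) : Set (Set ι) :=
  {X | X ∈ MCR R minsupp minbond ∧ ∀ X₁ : Set ι, X ⊂ X₁ → bond R X₁ < bond R X}

/-- Minimal rare correlated patterns. -/
def MMCR (R : τ → ι → Prop) (minsupp : ℕ) (minbond : ℚ) : Set (Set ι) :=
  {X | X ∈ MCR R minsupp minbond ∧ ∀ X₁ : Set ι, X₁.Nonempty → X₁ ⊂ X → bond R X < bond R X₁}

/-!
On nonempty patterns `bond` is antitone, so `bond M = bond F` forces `bond` to be constant on
the interval `[M, F]`. Along `X ⊆ F` the numerator `SConj` can only drop and the denominator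
`SDisj` can only grow, so two equal ratios must have equal numerators.
-/

section Support

omit [Fintype ι]

variable (R : τ → ι → Prop)

theorem SConj_anti : Antitone (SConj R) := fun _ _ hAB =>
  Set.ncard_le_ncard (fun _ ht _ hi => ht _ (hAB hi)) (Set.toFinite _)

theorem SDisj_mono : Monotone (SDisj R) := fun _ _ hAB =>
  Set.ncard_le_ncard (fun _ ⟨i, hi, hti⟩ => ⟨i, hAB hi, hti⟩) (Set.toFinite _)

theorem SConj_le_SDisj {A : Set ι} (hA : A.Nonempty) : SConj R A ≤ SDisj R A :=
  let ⟨i, hi⟩ := hA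
  Set.ncard_le_ncard (fun _ ht => ⟨i, hi, ht i hi⟩) (Set.toFinite _)

theorem bond_anti {A B : Set ι} (hA : A.Nonempty) (hAB : A ⊆ B) : bond R B ≤ bond R A := by
  rcases (SDisj R A).eq_zero_or_pos with hd | hd
  · have hB : SConj R B = 0 := by
      have := SConj_anti R hAB
      have := SConj_le_SDisj R hA
      omega
    simp [bond, hB, hd]
  · exact div_le_div₀ (Nat.cast_nonneg _) (mod_cast SConj_anti R hAB) (mod_cast hd)
      (mod_cast SDisj_mono R hAB)

theorem SConj_eq_of_bond_eq {A B : Set ι} (hA : A.Nonempty) (hAB : A ⊆ B)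
    (h : bond R A = bond R B) : SConj R A = SConj R B := by
  have hconj := SConj_anti R hAB
  rcases (SDisj R A).eq_zero_or_pos with hd | hd
  · have := SConj_le_SDisj R hA
    omega
  have hdisj := SDisj_mono R hAB
  have hdB : 0 < SDisj R B := hd.trans_le hdisj
  have hcross : SConj R A * SDisj R B = SConj R B * SDisj R A := by
    rw [bond, bond, div_eq_div_iff (by positivity) (by positivity)] at h
    exact_mod_cast h
  refine Nat.eq_of_mul_eq_mul_right hd (le_antisymm ?_ (Nat.mul_le_mul_right _ hconj))
  calc SConj R A * SDisj R A ≤ SConj R A * SDisj R B := Nat.mul_le_mul_left _ hdisj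
    _ = SConj R B * SDisj R A := hcross

end Support

theorem stmt15 (R : τ → ι → Prop) (minsupp : ℕ) (minbond : ℚ) (M F X : Set ι)
    (hM : M ∈ MMCR R minsupp minbond) (hF : F ∈ MFCR R minsupp minbond)
    (hMX : M ⊆ X) (hXF : X ⊆ F) (hb : bond R M = bond R F) :
    bond R X = bond R F ∧ SConj R X = SConj R F ∧ X ∈ MCR R minsupp minbond := by
  obtain ⟨⟨hMne, -, -⟩, -⟩ := hM
  obtain ⟨⟨-, hFsupp, hFbond⟩, -⟩ := hF
  have hXne : X.Nonempty := hMne.mono hMX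
  have hbond : bond R X = bond R F :=
    le_antisymm ((bond_anti R hMne hMX).trans_eq hb) (bond_anti R hXne hXF)
  have hsupp : SConj R X = SConj R F := SConj_eq_of_bond_eq R hXne hXF hbond
  exact ⟨hbond, hsupp, hXne, hsupp ▸ hFsupp, hbond ▸ hFbond⟩
end

section
/- Characterization of f_bond as intersection of conjunctive and disjunctive closures: for a nonempty itemset X with SConj(X) > 0, f_bond(X) = f_c(X) ∩ f_d(X), where f_c(X) = {i ∈ I | every transaction containing all of X contains i} and f_d(X) = {i ∈ I | every transaction containing i contains some item of X}. -/
variable {τ ι : Type*} [Fintype τ] [Fintype ι]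

/-- The closure operator associated with the bond measure. -/
noncomputable def fbond (R : τ → ι → Prop) (X : Set ι) : Set ι :=
  X ∪ {i : ι | i ∉ X ∧ bond R X = bond R (insert i X)}

/-- The conjunctive closure of `X`. -/
def fc (R : τ → ι → Prop) (X : Set ι) : Set ι :=
  {i : ι | ∀ t : τ, (∀ j ∈ X, R t j) → R t i}

/-- The disjunctive closure of `X`. -/
def fd (R : τ → ι → Prop) (X : Set ι) : Set ι :=
  {i : ι | ∀ t : τ, R t i → ∃ j ∈ X, R t j}

/-! Adding an item `i` to `X` can only shrink the conjunctive support and enlarge the disjunctive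
support, so `bond` cannot increase; it stays the same exactly when neither support moves. The
conjunctive support stays the same iff `i ∈ fc X`, the disjunctive one iff `i ∈ fd X`. -/

theorem div_eq_div_iff_of_le_of_le {K : Type*} [Semifield K] [LinearOrder K]
    [IsStrictOrderedRing K] {a a' b b' : K} (ha : 0 < a) (hb : 0 < b) (ha' : a' ≤ a)
    (hb' : b ≤ b') : a / b = a' / b' ↔ a' = a ∧ b' = b := by
  refine ⟨fun h => ?_, fun ⟨ha, hb⟩ => by rw [ha, hb]⟩
  have hb'_pos : 0 < b' := hb.trans_le hb'
  have hle : a / b ≤ a / b' := calc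
    a / b = a' / b' := h
    _ ≤ a / b' := div_le_div_of_nonneg_right ha' hb'_pos.le
  have hb_eq : b' = b := le_antisymm ((div_le_div_iff_of_pos_left ha hb hb'_pos).1 hle) hb'
  subst hb_eq
  exact ⟨le_antisymm ha' ((div_le_div_iff_of_pos_right hb).1 h.le), rfl⟩

theorem Set.ncard_eq_ncard_iff_of_subset {α : Type*} {s t : Set α} (h : s ⊆ t)
    (ht : t.Finite) : s.ncard = t.ncard ↔ s = t :=
  ⟨fun hst => Set.eq_of_subset_of_ncard_le h hst.ge ht, congrArg Set.ncard⟩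

section Supports

variable {τ ι : Type*} (R : τ → ι → Prop) {X : Set ι}

theorem subset_fc : X ⊆ fc R X :=
  fun _ hi _ ht => ht _ hi

theorem subset_fd : X ⊆ fd R X :=
  fun i hi _ hR => ⟨i, hi, hR⟩

theorem setOf_forall_insert_subset (i : ι) :
    {t | ∀ j ∈ insert i X, R t j} ⊆ {t | ∀ j ∈ X, R t j} :=
  fun _ ht j hj => ht j (Set.mem_insert_of_mem i hj)

theorem setOf_exists_subset_insert (i : ι) :
    {t | ∃ j ∈ X, R t j} ⊆ {t | ∃ j ∈ insert i X, R t j} :=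
  fun _ ⟨j, hj, hR⟩ => ⟨j, Set.mem_insert_of_mem i hj, hR⟩

variable [Finite τ]

theorem SConj_le_SDisj_s19 (hX : X.Nonempty) : SConj R X ≤ SDisj R X :=
  Set.ncard_le_ncard (fun _ ht => hX.elim fun j hj => ⟨j, hj, ht j hj⟩)

theorem SConj_insert_le (i : ι) : SConj R (insert i X) ≤ SConj R X :=
  Set.ncard_le_ncard (setOf_forall_insert_subset R i)

theorem SDisj_le_SDisj_insert (i : ι) : SDisj R X ≤ SDisj R (insert i X) :=
  Set.ncard_le_ncard (setOf_exists_subset_insert R i)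

theorem SConj_insert_eq_iff (i : ι) : SConj R (insert i X) = SConj R X ↔ i ∈ fc R X := by
  rw [SConj, SConj, Set.ncard_eq_ncard_iff_of_subset (setOf_forall_insert_subset R i)
    (Set.toFinite _)]
  simp [Set.ext_iff, fc]

theorem SDisj_insert_eq_iff (i : ι) : SDisj R (insert i X) = SDisj R X ↔ i ∈ fd R X := by
  rw [eq_comm, SDisj, SDisj, Set.ncard_eq_ncard_iff_of_subset (setOf_exists_subset_insert R i)
    (Set.toFinite _)]
  simp [Set.ext_iff, fd]

theorem bond_eq_bond_insert_iff (hX : X.Nonempty) (hc : 0 < SConj R X) (i : ι) :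
    bond R X = bond R (insert i X) ↔ i ∈ fc R X ∩ fd R X := by
  have hd : (0 : ℚ) < SDisj R X := by exact_mod_cast hc.trans_le (SConj_le_SDisj_s19 R hX)
  rw [bond, bond, div_eq_div_iff_of_le_of_le (by exact_mod_cast hc) hd
    (by exact_mod_cast SConj_insert_le R i) (by exact_mod_cast SDisj_le_SDisj_insert R i)]
  norm_cast
  rw [SConj_insert_eq_iff, SDisj_insert_eq_iff, Set.mem_inter_iff]

end Supports

theorem stmt19 (R : τ → ι → Prop) (X : Set ι) (hX : X.Nonempty) (hc : 0 < SConj R X) :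
    fbond R X = fc R X ∩ fd R X := by
  have hbond : fbond R X = X ∪ (fc R X ∩ fd R X) := by
    ext i
    by_cases hi : i ∈ X
    · simp [fbond, hi, subset_fc R hi, subset_fd R hi]
    · simp only [fbond, Set.mem_union, Set.mem_ofPred_eq, hi, not_false_eq_true, true_and,
        false_or, bond_eq_bond_insert_iff R hX hc]
  rw [hbond, Set.union_eq_right]
  exact Set.subset_inter (subset_fc R) (subset_fd R)
end
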